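/- Let C, C' be connected components of T \ F such that C' is an internal component whose root r_{C'} is a proper ancestor of r_C, and let b be the (unique) boundary vertex of C' that is an ancestor of r_C. Then there exists a back-edge with one endpoint in C and the other in C' if and only if there exists a back-edge (x,y) with x ∈ C and y ∈ [r_{C'}, p(b)] (in DFS preorder). -/
import Mathlib


variable {n : ℕ}

/-- `Anc p v u` : `v` is an ancestor of `u` in the rooted tree with parent function `p`
(every vertex is an ancestor of itself). -/
def Anc (p : Fin n → Fin n) (v u : Fin n) : Prop :=
  Relation.ReflTransGen (fun a b => p a = b) u v

/-- `ND p v` : the number of descendants of `v` (including `v`). -/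
noncomputable def ND (p : Fin n → Fin n) (v : Fin n) : ℕ :=
  Set.ncard {u | Anc p v u}

/-- `InComp p F v u` : `u` lies in the same connected component of `T \ F` as `v`
(connectivity via tree edges avoiding the failed set `F`). -/
def InComp (p : Fin n → Fin n) (F : Set (Fin n)) (v u : Fin n) : Prop :=
  Relation.ReflTransGen (fun a b => a ∉ F ∧ b ∉ F ∧ (p a = b ∨ p b = a)) v u

/-- `ρ` is the root of its connected component of `T \ F`:
`ρ` is non-failed and an ancestor of every vertex of its component. -/
def IsCompRoot (p : Fin n → Fin n) (F : Set (Fin n)) (ρ : Fin n) : Prop :=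
  ρ ∉ F ∧ ∀ u, InComp p F ρ u → Anc p ρ u

/-- The component rooted at `ρ` is internal: some failed vertex is a descendant of `ρ`. -/
def Internal (p : Fin n → Fin n) (F : Set (Fin n)) (ρ : Fin n) : Prop :=
  ∃ f ∈ F, Anc p ρ f

/-- `b` is a boundary vertex of the component of `T \ F` rooted at `ρ`. -/
def Boundary (p : Fin n → Fin n) (F : Set (Fin n)) (ρ b : Fin n) : Prop :=
  b ∈ F ∧ InComp p F ρ (p b)

/-- `(x, y)` is a back-edge: a non-tree edge of `G` with `y` an ancestor of `x`. -/
def IsBack (G : SimpleGraph (Fin n)) (p : Fin n → Fin n) (x y : Fin n) : Prop :=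
  G.Adj x y ∧ Anc p y x ∧ p x ≠ y

/-- The set of lower endpoints `y < v` of back-edges whose upper endpoint is a
descendant of `v`. -/
def LowSet (G : SimpleGraph (Fin n)) (p : Fin n → Fin n) (v : Fin n) : Set (Fin n) :=
  {y | (∃ x, Anc p v x ∧ IsBack G p x y) ∧ y < v}

/-- `IsLow G p k v y` : `y = low_k(v)`, i.e. `y` is the `k`-th smallest element of
`LowSet G p v` (for `k ≥ 1`). -/
def IsLow (G : SimpleGraph (Fin n)) (p : Fin n → Fin n) (k : ℕ) (v y : Fin n) : Prop :=
  y ∈ LowSet G p v ∧ Set.ncard {z ∈ LowSet G p v | z < y} = k - 1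

/-- `a` and `b` are connected in `G \ F`. -/
def ConnGF (G : SimpleGraph (Fin n)) (F : Set (Fin n)) (a b : Fin n) : Prop :=
  Relation.ReflTransGen (fun u w => G.Adj u w ∧ u ∉ F ∧ w ∉ F) a b

/-- `g = parent_F(f)` : `g` is the nearest (deepest) proper ancestor of `f` lying in `F`. -/
def NearestF (p : Fin n → Fin n) (F : Set (Fin n)) (f g : Fin n) : Prop :=
  g ∈ F ∧ Anc p g f ∧ g ≠ f ∧ ∀ g' ∈ F, Anc p g' f → g' ≠ f → Anc p g' g


section Aux
variable {n : ℕ}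

lemma anc_trans {p : Fin n → Fin n} {a b c : Fin n} (h1 : Anc p a b) (h2 : Anc p b c) :
    Anc p a c := h2.trans h1

lemma anc_step {p : Fin n → Fin n} (u : Fin n) : Anc p (p u) u :=
  Relation.ReflTransGen.single rfl

lemma anc_le {p : Fin n → Fin n} (hple : ∀ v, p v ≤ v) {v u : Fin n}
    (h : Anc p v u) : v ≤ u := by
  induction h with
  | refl => exact le_refl _
  | tail h1 h2 ih => exact le_trans (h2 ▸ hple _) ih

lemma anc_antisymm {p : Fin n → Fin n} (hple : ∀ v, p v ≤ v) {v u : Fin n}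
    (h1 : Anc p v u) (h2 : Anc p u v) : v = u :=
  le_antisymm (anc_le hple h1) (anc_le hple h2)

lemma anc_total {p : Fin n → Fin n} (hple : ∀ v, p v ≤ v)
    (hpre : ∀ u v w : Fin n, u < v → v < w → Anc p u w → Anc p u v)
    {x y z : Fin n} (hy : Anc p y x) (hz : Anc p z x) :
    Anc p y z ∨ Anc p z y := by
  rcases lt_trichotomy y z with h | h | h
  · rcases eq_or_lt_of_le (anc_le hple hz) with h2 | h2
    · exact Or.inl (h2 ▸ hy)
    · exact Or.inl (hpre y z x h h2 hy)
  · exact Or.inl (h ▸ Relation.ReflTransGen.refl)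
  · rcases eq_or_lt_of_le (anc_le hple hy) with h2 | h2
    · exact Or.inr (h2 ▸ hz)
    · exact Or.inr (hpre z y x h h2 hz)

lemma anc_parent {p : Fin n → Fin n} {y b : Fin n} (h : Anc p y b) (hne : y ≠ b) :
    Anc p y (p b) := by
  rcases Relation.ReflTransGen.cases_head h with h | ⟨c, hc, h2⟩
  · exact absurd h.symm hne
  · exact hc.symm ▸ h2

lemma incomp_notF {p : Fin n → Fin n} {F : Set (Fin n)} {v u : Fin n}
    (hv : v ∉ F) (h : InComp p F v u) : u ∉ F := by
  induction h with
  | refl => exact hv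
  | tail h1 h2 ih => exact h2.2.1

lemma step_iff {p : Fin n → Fin n} {F : Set (Fin n)}
    {w c d : Fin n} (hw : w ∈ F) (hc : c ∉ F) (hd : d ∉ F) (hpc : p c = d) :
    (Anc p w c ∧ w ≠ c) ↔ (Anc p w d ∧ w ≠ d) := by
  constructor
  · rintro ⟨h1, h2⟩
    exact ⟨hpc ▸ anc_parent h1 h2, fun he => hd (he ▸ hw)⟩
  · rintro ⟨h1, h2⟩
    exact ⟨anc_trans h1 (hpc ▸ anc_step c), fun he => hc (he ▸ hw)⟩

lemma incomp_cross {p : Fin n → Fin n} {F : Set (Fin n)}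
    {w a u : Fin n} (hw : w ∈ F) (h : InComp p F a u) :
    (Anc p w a ∧ w ≠ a) ↔ (Anc p w u ∧ w ≠ u) := by
  induction h with
  | refl => exact Iff.rfl
  | tail h1 h2 ih =>
    refine ih.trans ?_
    rcases h2.2.2 with hp | hp
    · exact step_iff hw h2.1 h2.2.1 hp
    · exact (step_iff hw h2.2.1 h2.1 hp).symm

/-- Every vertex on the chain from the component root down to a member
of its component is non-failed. -/
lemma clean_of_incomp {p : Fin n → Fin n} {F : Set (Fin n)} (hple : ∀ v, p v ≤ v)
    {q u : Fin n} (hqF : q ∉ F) (h : InComp p F q u)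
    {w : Fin n} (h1 : Anc p q w) (h2 : Anc p w u) : w ∉ F := by
  intro hw
  have huF : u ∉ F := incomp_notF hqF h
  have hwu : w ≠ u := fun he => huF (he ▸ hw)
  have := (incomp_cross hw h).mpr ⟨h2, hwu⟩
  exact hqF (anc_antisymm hple this.1 h1 ▸ hw)

/-- A descendant of `q` whose chain from `q` avoids `F` lies in the component of `q`. -/
lemma incomp_of_clean {p : Fin n → Fin n} {F : Set (Fin n)} {q u : Fin n}
    (h : Anc p q u)
    (hclean : ∀ w, Anc p q w → Anc p w u → w ∉ F) : InComp p F q u := by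
  revert hclean
  induction h using Relation.ReflTransGen.head_induction_on with
  | refl => exact fun _ => Relation.ReflTransGen.refl
  | head hstep htail ih =>
    rename_i u' c
    intro hclean
    have hcl : ∀ w, Anc p q w → Anc p w c → w ∉ F := fun w hw1 hw2 =>
      hclean w hw1 (anc_trans hw2 (Relation.ReflTransGen.single hstep))
    have hcF : c ∉ F := hcl c htail Relation.ReflTransGen.refl
    have huF : u' ∉ F := hclean u' (htail.head hstep) Relation.ReflTransGen.refl
    exact (ih hcl).tail ⟨hcF, huF, Or.inr hstep⟩

end Aux

/-- Let `C'` be an internal component whose root is a proper ancestor of `r_C`, and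
`b` the boundary vertex of `C'` that is an ancestor of `r_C`. There is a back-edge
between `C` and `C'` iff there is a back-edge `(x, y)` with `x ∈ C` and
`y ∈ [r_{C'}, p(b)]`. -/
theorem stmt11
    (G : SimpleGraph (Fin n)) (p : Fin n → Fin n) (r : Fin n)
    (hG : G.Connected)
    (hpr : p r = r) (hplt : ∀ v, v ≠ r → p v < v) (hroot : ∀ v, Anc p r v)
    (hspan : ∀ v, v ≠ r → G.Adj (p v) v)
    (hdfs : ∀ x y, G.Adj x y → Anc p x y ∨ Anc p y x)
    (hpre : ∀ u v w : Fin n, u < v → v < w → Anc p u w → Anc p u v)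
    (F : Set (Fin n)) (hrF : r ∉ F)
    (ρ ρ' : Fin n) (hρ : IsCompRoot p F ρ)
    (hρ' : IsCompRoot p F ρ') (hint : Internal p F ρ')
    (hanc : Anc p ρ' ρ) (hne : ρ' ≠ ρ)
    (b : Fin n) (hb : Boundary p F ρ' b) (hbanc : Anc p b ρ) :
    (∃ x y, IsBack G p x y ∧
        ((InComp p F ρ x ∧ InComp p F ρ' y) ∨ (InComp p F ρ y ∧ InComp p F ρ' x))) ↔
    (∃ x y, IsBack G p x y ∧ InComp p F ρ x ∧ ρ' ≤ y ∧ y ≤ p b) := by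
  have hple : ∀ v, p v ≤ v := by
    intro v
    by_cases h : v = r
    · subst h; rw [hpr]
    · exact (hplt v h).le
  obtain ⟨hρF, hρanc⟩ := hρ
  obtain ⟨hρ'F, hρ'anc⟩ := hρ'
  obtain ⟨hbF, hbpb⟩ := hb
  have hρ'pb : Anc p ρ' (p b) := hρ'anc _ hbpb
  have hρ'b : Anc p ρ' b := anc_trans hρ'pb (anc_step b)
  have hbr : b ≠ r := fun he => hrF (he ▸ hbF)
  have hpbb : p b < b := hplt b hbr
  constructor
  · rintro ⟨x, y, hback, hcase⟩
    rcases hcase with ⟨hx, hy⟩ | ⟨hy', hx'⟩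
    · -- x ∈ C, y ∈ C'
      have hρx : Anc p ρ x := hρanc x hx
      have hρ'y : Anc p ρ' y := hρ'anc y hy
      have hyx : Anc p y x := hback.2.1
      have hbx : Anc p b x := anc_trans hbanc hρx
      have hyF : y ∉ F := incomp_notF hρ'F hy
      have hyb : y ≠ b := fun he => hyF (he ▸ hbF)
      have h1 : Anc p y b := by
        rcases anc_total hple hpre hyx hbx with h | h
        · exact h
        · exact absurd hbF (clean_of_incomp hple hρ'F hy hρ'b h)
      exact ⟨x, y, hback, hx, anc_le hple hρ'y, anc_le hple (anc_parent h1 hyb)⟩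
    · -- y ∈ C, x ∈ C' : impossible, since b ∈ F would lie on the chain from ρ' to x
      exfalso
      have hρy : Anc p ρ y := hρanc y hy'
      have hyx : Anc p y x := hback.2.1
      have hbx : Anc p b x := anc_trans hbanc (anc_trans hρy hyx)
      exact clean_of_incomp hple hρ'F hx' hρ'b hbx hbF
  · rintro ⟨x, y, hback, hx, hge, hle⟩
    have hρx : Anc p ρ x := hρanc x hx
    have hyx : Anc p y x := hback.2.1
    have hbx : Anc p b x := anc_trans hbanc hρx
    have hρ'x : Anc p ρ' x := anc_trans hanc hρx
    have hρ'y : Anc p ρ' y := by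
      rcases anc_total hple hpre hyx hρ'x with h | h
      · rw [le_antisymm (anc_le hple h) hge]
        exact Relation.ReflTransGen.refl
      · exact h
    have hylt : y < b := lt_of_le_of_lt hle hpbb
    have hyb : Anc p y b := by
      rcases anc_total hple hpre hyx hbx with h | h
      · exact h
      · exact absurd (anc_le hple h) (not_le.mpr hylt)
    have hypb : Anc p y (p b) := anc_parent hyb (ne_of_lt hylt)
    have hyC' : InComp p F ρ' y :=
      incomp_of_clean hρ'y (fun w hw1 hw2 =>
        clean_of_incomp hple hρ'F hbpb hw1 (anc_trans hw2 hypb))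
    exact ⟨x, y, hback, Or.inl ⟨hx, hyC'⟩⟩
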